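/- The product DAG of a trimmed sequential variable-set automaton 𝒜 and a document d is a leveled mapping DAG: it is acyclic, on every path the labels of the marker edges are pairwise disjoint, every ε-edge increases the level (second component) by exactly 1, every marker edge preserves the level, and every pair (m,i) in a marker-edge label has i equal to the level of its endpoints; moreover its width is at most |Q|. -/

import Mathlib

namespace Spanners

/-- Variable markers: an open marker `⊢x` or a close marker `x⊣` for a variable `x`. -/
inductive Marker (V : Type) : Type where
  | openM : V → Marker V
  | closeM : V → Marker V
deriving DecidableEq

/-- A variable-set automaton (VA) over alphabet `Sig`, variables `V`, states `Q`. -/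
structure VA (Sig V Q : Type) : Type where
  init : Q
  final : Set Q
  letterTr : Q → Sig → Q → Prop
  varTr : Q → Marker V → Q → Prop

namespace VA

variable {Sig V Q : Type}

/-- `Run A d (q, i) L (q', i')` holds when there is a run of `A` on `d` from configuration
`(q, i)` to configuration `(q', i')` reading the list `L` of (marker, position) pairs,
in order. Letter transitions advance the position and must match the document letter;
variable transitions keep the position and read their marker at that position. -/
inductive Run (A : VA Sig V Q) (d : List Sig) :
    Q × ℕ → List (Marker V × ℕ) → Q × ℕ → Prop where
  | refl (c : Q × ℕ) : Run A d c [] c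
  | stepLetter {q : Q} {i : ℕ} {a : Sig} {q' : Q} {L : List (Marker V × ℕ)} {c : Q × ℕ} :
      A.letterTr q a q' → d[i]? = some a →
      Run A d (q', i + 1) L c → Run A d (q, i) L c
  | stepVar {q : Q} {i : ℕ} {m : Marker V} {q' : Q} {L : List (Marker V × ℕ)} {c : Q × ℕ} :
      A.varTr q m q' →
      Run A d (q', i) L c → Run A d (q, i) ((m, i) :: L) c

/-- An accepting run of `A` on `d`, reading the trace `L`: it goes from the initial
configuration `(q₀, 0)` to a configuration `(q_f, |d|)` with `q_f` final. -/
def Accepting (A : VA Sig V Q) (d : List Sig) (L : List (Marker V × ℕ)) : Prop :=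
  ∃ qf, qf ∈ A.final ∧ A.Run d (A.init, 0) L (qf, d.length)

/-- Validity of a trace: every variable marker is read at most once, and whenever
`⊢x` is read at position `i` then `x⊣` is read at some position `i' ≥ i`. -/
def ValidTrace (L : List (Marker V × ℕ)) : Prop :=
  (∀ (m : Marker V) (k k' : ℕ) (hk : k < L.length) (hk' : k' < L.length),
      (L.get ⟨k, hk⟩).1 = m → (L.get ⟨k', hk'⟩).1 = m → k = k') ∧
  (∀ (x : V) (i : ℕ), (Marker.openM x, i) ∈ L →
      ∃ i', i ≤ i' ∧ (Marker.closeM x, i') ∈ L)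

/-- A valid run: an accepting run whose trace is valid. -/
def Valid (A : VA Sig V Q) (d : List Sig) (L : List (Marker V × ℕ)) : Prop :=
  A.Accepting d L ∧ ValidTrace L

/-- The mapping defined by (the trace of) a valid run: the graph of the partial function
sending each variable `x` to the span `[i, i'⟩` such that `⊢x` is read at `i` and
`x⊣` is read at `i'`. -/
def traceMapping (L : List (Marker V × ℕ)) : Set (V × ℕ × ℕ) :=
  {p | (Marker.openM p.1, p.2.1) ∈ L ∧ (Marker.closeM p.1, p.2.2) ∈ L}

/-- The document spanner of a VA: to each document it assigns the set of mappings
of its valid runs. -/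
def spanner (A : VA Sig V Q) (d : List Sig) : Set (Set (V × ℕ × ℕ)) :=
  {m | ∃ L, A.Valid d L ∧ m = traceMapping L}

/-- A VA is sequential when, on every document, every accepting run is valid. -/
def Sequential (A : VA Sig V Q) : Prop :=
  ∀ (d : List Sig) (L : List (Marker V × ℕ)), A.Accepting d L → ValidTrace L

/-- Two VAs are equivalent when their document spanners agree on every document. -/
def Equivalent {Q' : Type} (A : VA Sig V Q) (B : VA Sig V Q') : Prop :=
  ∀ d : List Sig, A.spanner d = B.spanner d

/-- A VA is trimmed when every state appears in some accepting run on some document. -/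
def Trimmed (A : VA Sig V Q) : Prop :=
  ∀ q : Q, ∃ (d : List Sig) (i : ℕ) (L₁ L₂ : List (Marker V × ℕ)) (qf : Q),
    qf ∈ A.final ∧ A.Run d (A.init, 0) L₁ (q, i) ∧ A.Run d (q, i) L₂ (qf, d.length)

/-- The mappings of a VA on a document, each written as the set of pairs `(m, i)` of a
marker `m` read at position `i` in a valid run. -/
def mappings (A : VA Sig V Q) (d : List Sig) : Set (Set (Marker V × ℕ)) :=
  {T | ∃ L, A.Valid d L ∧ T = {p | p ∈ L}}

end VA

/-- A labeled leveled-style DAG structure used for mapping DAGs: vertices are pairs whose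
second component is a nonnegative integer (the level); each edge label is either `none`
(an ε-edge) or `some S` for a finite set `S` of (marker, position) pairs (a marker edge). -/
structure LMDAG (β M : Type) : Type where
  verts : Set (β × ℕ)
  init : β × ℕ
  final : β × ℕ
  edge : β × ℕ → Option (Finset (M × ℕ)) → β × ℕ → Prop

namespace LMDAG

variable {β M : Type}

/-- Paths in the DAG, recording the list of edge labels traversed. -/
inductive Path (G : LMDAG β M) : β × ℕ → List (Option (Finset (M × ℕ))) → β × ℕ → Prop where
  | refl (v : β × ℕ) : Path G v [] v
  | step {u : β × ℕ} {l : Option (Finset (M × ℕ))} {v : β × ℕ}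
      {L : List (Option (Finset (M × ℕ)))} {w : β × ℕ} :
      G.edge u l v → Path G v L w → Path G u (l :: L) w

/-- The mapping `μ(π)` of a path, given by its list of labels: the union of the labels
of its marker edges. -/
def mu (L : List (Option (Finset (M × ℕ)))) : Set (M × ℕ) :=
  {p | ∃ S : Finset (M × ℕ), some S ∈ L ∧ p ∈ S}

/-- Requirements of a mapping DAG: initial and final vertices and edge endpoints are
vertices, the graph is acyclic, and on every path the labels of the marker edges are
pairwise disjoint. -/
def IsMappingDAG (G : LMDAG β M) : Prop :=
  G.init ∈ G.verts ∧ G.final ∈ G.verts ∧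
  (∀ u l v, G.edge u l v → u ∈ G.verts ∧ v ∈ G.verts) ∧
  (∀ v L, G.Path v L v → L = []) ∧
  (∀ u L w, G.Path u L w →
    L.Pairwise fun l₁ l₂ => ∀ S₁ S₂ : Finset (M × ℕ),
      l₁ = some S₁ → l₂ = some S₂ → Disjoint S₁ S₂)

/-- Label lists that start with a marker edge, end with an ε-edge, and alternate
between marker edges and ε-edges. -/
inductive Alt : List (Option (Finset (M × ℕ))) → Prop where
  | base (S : Finset (M × ℕ)) : Alt [some S, none]
  | cons (S : Finset (M × ℕ)) {L : List (Option (Finset (M × ℕ)))} :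
      Alt L → Alt (some S :: none :: L)

/-- A mapping DAG is normalized if every path from the initial vertex to the final vertex
starts with a marker edge, ends with an ε-edge, and alternates between marker edges
and ε-edges. -/
def Normalized (G : LMDAG β M) : Prop :=
  ∀ L, G.Path G.init L G.final → Alt L

/-- A mapping DAG is leveled if the initial vertex has level 0, every ε-edge increases
the level by exactly one, every marker edge preserves the level, and every pair `(m, i)`
in the label of a marker edge has `i` equal to the level of its endpoints. -/
def Leveled (G : LMDAG β M) : Prop :=
  G.init.2 = 0 ∧
  (∀ u v, G.edge u none v → v.2 = u.2 + 1) ∧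
  (∀ u S v, G.edge u (some S) v → v.2 = u.2 ∧ ∀ p ∈ S, p.2 = u.2)

/-- A mapping DAG is trimmed if every vertex is accessible from the initial vertex and
co-accessible to the final vertex. -/
def Trimmed (G : LMDAG β M) : Prop :=
  ∀ v ∈ G.verts, (∃ L, G.Path G.init L v) ∧ (∃ L, G.Path v L G.final)

/-- `M(U)`: the set of mappings of paths from a vertex of `U` to the final vertex. -/
def MapSet (G : LMDAG β M) (U : Set (β × ℕ)) : Set (Set (M × ℕ)) :=
  {T | ∃ v ∈ U, ∃ L, G.Path v L G.final ∧ T = mu L}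

/-- A level set: either the singleton of the final vertex, or a non-empty set of vertices
which all have the same level and are each the source of some marker edge. -/
def IsLevelSet (G : LMDAG β M) (Λ : Set (β × ℕ)) : Prop :=
  Λ = {G.final} ∨
  (Λ.Nonempty ∧ (∃ i, ∀ v ∈ Λ, v.2 = i) ∧
    ∀ v ∈ Λ, v ∈ G.verts ∧ ∃ S w, G.edge v (some S) w)

/-- The level of a level set (the common level of its vertices). -/
noncomputable def levelOf (Λ : Set (β × ℕ)) : ℕ := sInf {i | ∃ v ∈ Λ, v.2 = i}

/-- `NextLevel(Λ)`: the pairs `(S, Λ'')` where `S` labels some marker edge starting in `Λ`,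
and `Λ''` is the set of vertices reached from a vertex of `Λ` by a marker edge labeled `S`
followed by an ε-edge. -/
def NextLevel (G : LMDAG β M) (Λ : Set (β × ℕ)) :
    Set (Finset (M × ℕ) × Set (β × ℕ)) :=
  {p | (∃ v ∈ Λ, ∃ v', G.edge v (some p.1) v') ∧
       p.2 = {w | ∃ v ∈ Λ, ∃ v', G.edge v (some p.1) v' ∧ G.edge v' none w}}

/-- A vertex which is the final vertex or has an outgoing edge whose label is neither
ε nor ∅. -/
def GoodVert (G : LMDAG β M) (v : β × ℕ) : Prop :=
  v = G.final ∨ ∃ (S : Finset (M × ℕ)) (w : β × ℕ), G.edge v (some S) w ∧ S ≠ ∅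

/-- Reachability by a directed path. -/
def Reachable (G : LMDAG β M) (u v : β × ℕ) : Prop := ∃ L, G.Path u L v

/-- The jump level `JL(Λ)`: the first level `j ≥ level(Λ)` containing a vertex `v'`
reachable from some vertex of `Λ` such that `v'` is the final vertex or has an outgoing
edge whose label is neither ε nor ∅. -/
noncomputable def JL (G : LMDAG β M) (Λ : Set (β × ℕ)) : ℕ :=
  sInf {j | levelOf Λ ≤ j ∧
    ∃ v', v'.2 = j ∧ G.GoodVert v' ∧ ∃ v ∈ Λ, G.Reachable v v'}

/-- The jump set `Jump(Λ)`: `Λ` itself if `JL(Λ) = level(Λ)`, and otherwise the set of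
vertices at level `JL(Λ)` reachable from some vertex of `Λ` by a directed path whose
last edge is an ε-edge. -/
def JumpSet (G : LMDAG β M) (Λ : Set (β × ℕ)) : Set (β × ℕ) :=
  {w | (G.JL Λ = levelOf Λ ∧ w ∈ Λ) ∨
       (G.JL Λ ≠ levelOf Λ ∧ w.2 = G.JL Λ ∧
         ∃ v ∈ Λ, ∃ L v', G.Path v L v' ∧ G.edge v' none w)}

/-- `Reach(i, j)` relates a vertex `u` of level `i` to a vertex `v` of level `j` when
there is a path from `u` to `v` traversing only ε-edges and marker edges labeled ∅,
whose last edge is an ε-edge. -/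
def ReachRel (G : LMDAG β M) (i j : ℕ) (u v : β × ℕ) : Prop :=
  u ∈ G.verts ∧ v ∈ G.verts ∧ u.2 = i ∧ v.2 = j ∧
  ∃ L, G.Path u L v ∧ (∀ l ∈ L, l = none ∨ l = some (∅ : Finset (M × ℕ))) ∧
    L.getLast? = some none

/-- Paths as data: `IsPathL G u steps w` holds when `steps` is the list of
(label, target vertex) pairs of the successive edges of a path from `u` to `w`. -/
def IsPathL (G : LMDAG β M) : β × ℕ → List (Option (Finset (M × ℕ)) × (β × ℕ)) → β × ℕ → Prop
  | u, [], w => u = w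
  | u, e :: rest, w => G.edge u e.1 e.2 ∧ G.IsPathL e.2 rest w

/-- An `S`-path: a path with no ε-edge whose labels are exactly the elements of `S`,
each occurring exactly once. -/
def ExactPath [DecidableEq M] (G : LMDAG β M) (S : Set (Finset (M × ℕ)))
    (u v : β × ℕ) : Prop :=
  ∃ L, G.Path u L v ∧ (∀ l ∈ L, ∃ s ∈ S, l = some s) ∧
    ∀ s ∈ S, List.count (some s) L = 1

/-- An `S⁺/S⁻`-path: a path with no ε-edge and no edge labeled by an element of `S⁻`,
on which every label of `S⁺` occurs exactly once. -/
def PMPath [DecidableEq M] (G : LMDAG β M) (Sp Sm : Set (Finset (M × ℕ)))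
    (u v : β × ℕ) : Prop :=
  ∃ L, G.Path u L v ∧ (∀ l ∈ L, l ≠ none ∧ ∀ s ∈ Sm, l ≠ some s) ∧
    ∀ s ∈ Sp, List.count (some s) L = 1

end LMDAG

/-- An extended VA: letter transitions and ev-transitions reading a (possibly empty)
finite set of variable markers; states are partitioned via `evState` into ev-states
and letter-states. -/
structure EVA (Sig V Q : Type) : Type where
  init : Q
  final : Set Q
  evState : Q → Prop
  letterTr : Q → Sig → Q → Prop
  evTr : Q → Finset (Marker V) → Q → Prop

namespace EVA

/-- The data of a run of an extended VA on a document of length `n`: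
states `qs i`, `qs' i` and marker sets `Ms i` for `0 ≤ i ≤ n`. -/
structure RunData (Q V : Type) (n : ℕ) : Type where
  qs : Fin (n + 1) → Q
  qs' : Fin (n + 1) → Q
  Ms : Fin (n + 1) → Finset (Marker V)

variable {Sig V Q : Type}

/-- Wellformedness of the partition into ev-states and letter-states: ev-transitions go
from ev-states to letter-states, letter transitions from letter-states to ev-states,
the initial state is an ev-state, and all final states are letter-states. -/
def WF (A : EVA Sig V Q) : Prop :=
  (∀ q M q', A.evTr q M q' → A.evState q ∧ ¬ A.evState q') ∧
  (∀ q a q', A.letterTr q a q' → ¬ A.evState q ∧ A.evState q') ∧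
  A.evState A.init ∧ ∀ q ∈ A.final, ¬ A.evState q

/-- `r` is an accepting run of `A` on `d`:
`(q₀,0) →^{M₀} (q₀',0) →^{d₀} (q₁,1) →^{M₁} ⋯ →^{d_{n-1}} (q_n,n) →^{M_n} (q_n',n)`
with `q₀` the initial state and `q_n'` final. -/
def IsAccRun (A : EVA Sig V Q) (d : List Sig) (r : RunData Q V d.length) : Prop :=
  r.qs 0 = A.init ∧
  (∀ i, A.evTr (r.qs i) (r.Ms i) (r.qs' i)) ∧
  (∀ i : Fin d.length, A.letterTr (r.qs' i.castSucc) (d.get i) (r.qs i.succ)) ∧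
  r.qs' (Fin.last d.length) ∈ A.final

/-- The set of (marker, position) pairs read by a run. -/
def readSet {n : ℕ} (r : RunData Q V n) : Set (Marker V × ℕ) :=
  {p | ∃ i : Fin (n + 1), (i : ℕ) = p.2 ∧ p.1 ∈ r.Ms i}

/-- A valid run: an accepting run where every marker is read at most once and every open
marker read at position `i` is matched by the close marker read at some `i' ≥ i`. -/
def IsValidRun (A : EVA Sig V Q) (d : List Sig) (r : RunData Q V d.length) : Prop :=
  A.IsAccRun d r ∧
  (∀ (m : Marker V) (i j : Fin (d.length + 1)), m ∈ r.Ms i → m ∈ r.Ms j → i = j) ∧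
  (∀ (x : V) (i : Fin (d.length + 1)), Marker.openM x ∈ r.Ms i →
      ∃ j : Fin (d.length + 1), (i : ℕ) ≤ (j : ℕ) ∧ Marker.closeM x ∈ r.Ms j)

/-- An extended VA is sequential when every accepting run on every document is valid. -/
def Sequential (A : EVA Sig V Q) : Prop :=
  ∀ (d : List Sig) (r : RunData Q V d.length), A.IsAccRun d r → A.IsValidRun d r

/-- The mappings of an extended VA on a document, each written as the set of pairs
`(m, i)` of a marker `m` read at position `i` in a valid run. -/
def mappings (A : EVA Sig V Q) (d : List Sig) : Set (Set (Marker V × ℕ)) :=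
  {T | ∃ r : RunData Q V d.length, A.IsValidRun d r ∧ T = readSet r}

/-- The product DAG of an extended VA `A` and a document `d`: vertices
`Q × {0,…,n} ∪ {v_f}` (with `v_f = (none, n+1)` fresh), ε-edges for letter transitions
matching the document, marker edges labeled `{(m, i) | m ∈ M}` for ev-transitions at
each position `i`, and final ε-edges from `(q, n)`, `q` final, to `v_f`. -/
def productDAG [DecidableEq V] (A : EVA Sig V Q) (d : List Sig) :
    LMDAG (Option Q) (Marker V) where
  verts := {v | (∃ q : Q, v.1 = some q ∧ v.2 ≤ d.length) ∨ v = (none, d.length + 1)}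
  init := (some A.init, 0)
  final := (none, d.length + 1)
  edge := fun u l v =>
    (∃ (q : Q) (a : Sig) (q' : Q) (i : ℕ), A.letterTr q a q' ∧ d[i]? = some a ∧
        u = (some q, i) ∧ v = (some q', i + 1) ∧ l = none) ∨
    (∃ (q : Q) (Mset : Finset (Marker V)) (q' : Q) (i : ℕ),
        A.evTr q Mset q' ∧ i ≤ d.length ∧
        u = (some q, i) ∧ v = (some q', i) ∧ l = some (Mset.image fun m => (m, i))) ∨
    (∃ q : Q, q ∈ A.final ∧ u = (some q, d.length) ∧ v = (none, d.length + 1) ∧ l = none)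

end EVA

namespace VA

variable {Sig V Q : Type}

/-- The product DAG of a (non-extended) VA `A` and a document `d`: vertices
`Q × {0,…,n} ∪ {v_f}` (with `v_f = (none, n+1)` fresh), ε-edges for letter transitions
matching the document, marker edges labeled `{(m, i)}` for variable transitions at each
position `i`, and final ε-edges from `(q, n)`, `q` final, to `v_f`. -/
def productDAG (A : VA Sig V Q) (d : List Sig) : LMDAG (Option Q) (Marker V) where
  verts := {v | (∃ q : Q, v.1 = some q ∧ v.2 ≤ d.length) ∨ v = (none, d.length + 1)}
  init := (some A.init, 0)
  final := (none, d.length + 1)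
  edge := fun u l v =>
    (∃ (q : Q) (a : Sig) (q' : Q) (i : ℕ), A.letterTr q a q' ∧ d[i]? = some a ∧
        u = (some q, i) ∧ v = (some q', i + 1) ∧ l = none) ∨
    (∃ (q : Q) (m : Marker V) (q' : Q) (i : ℕ), A.varTr q m q' ∧ i ≤ d.length ∧
        u = (some q, i) ∧ v = (some q', i) ∧ l = some {(m, i)}) ∨
    (∃ q : Q, q ∈ A.final ∧ u = (some q, d.length) ∧ v = (none, d.length + 1) ∧ l = none)

end VA

/-!
Letter transitions raise the level by one and variable transitions keep it, so the product
DAG is leveled, and a path between two vertices of the same level is a run of `A` made of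
variable transitions only. Since `A` is trimmed, such a run can be spliced into an accepting
run on some document, so by sequentiality it never reads a marker twice. A cycle, traversed
twice, and a path whose marker edges share a pair `(m, i)` would both read some marker twice.
A level holds at most one vertex per state, the last one only `v_f`.
-/

theorem LMDAG.Path.exists_edge_of_mem {β M : Type} {G : LMDAG β M} {u w : β × ℕ}
    {L : List (Option (Finset (M × ℕ)))} {l : Option (Finset (M × ℕ))}
    (hp : G.Path u L w) (hl : l ∈ L) :
    ∃ L' x y, G.Path u L' x ∧ G.edge x l y := by
  induction hp with
  | refl => cases hl
  | @step u l' v L w he _ ih =>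
    rcases List.mem_cons.mp hl with rfl | hl
    · exact ⟨[], u, v, .refl u, he⟩
    · obtain ⟨L', x, y, hp', hxy⟩ := ih hl
      exact ⟨l' :: L', x, y, .step he hp', hxy⟩

namespace VA

variable {Sig V Q : Type}

inductive VarRun (A : VA Sig V Q) : Q → List (Marker V) → Q → Prop where
  | refl (q : Q) : VarRun A q [] q
  | step {q q' q'' : Q} {m : Marker V} {ms : List (Marker V)} :
      A.varTr q m q' → VarRun A q' ms q'' → VarRun A q (m :: ms) q''

variable {A : VA Sig V Q} {d : List Sig}

theorem Run.append {c₁ c₂ c₃ : Q × ℕ} {L₁ L₂ : List (Marker V × ℕ)}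
    (h₁ : A.Run d c₁ L₁ c₂) (h₂ : A.Run d c₂ L₂ c₃) : A.Run d c₁ (L₁ ++ L₂) c₃ := by
  induction h₁ with
  | refl => exact h₂
  | stepLetter ht hd _ ih => exact .stepLetter ht hd (ih h₂)
  | stepVar ht _ ih => exact .stepVar ht (ih h₂)

theorem Run.snd_le {c c' : Q × ℕ} {L : List (Marker V × ℕ)} (h : A.Run d c L c') :
    c.2 ≤ c'.2 := by
  induction h with
  | refl => exact le_rfl
  | stepLetter _ _ _ ih => exact (Nat.le_succ _).trans ih
  | stepVar _ _ ih => exact ih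

theorem Run.snd_le_length {c c' : Q × ℕ} {L : List (Marker V × ℕ)} (h : A.Run d c L c')
    (hc : c.2 ≤ d.length) : c'.2 ≤ d.length := by
  induction h with
  | refl => exact hc
  | stepLetter _ hd _ ih => exact ih (List.getElem?_eq_some_iff.mp hd).1
  | stepVar _ _ ih => exact ih hc

theorem Run.transport {c c' : Q × ℕ} {L : List (Marker V × ℕ)} (h : A.Run d c L c')
    {e : List Sig} {i' : ℕ} (he : ∀ k, c.2 + k < c'.2 → d[c.2 + k]? = e[i' + k]?) :
    ∃ L', A.Run e (c.1, i') L' (c'.1, i' + (c'.2 - c.2)) := by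
  induction h generalizing i' with
  | refl c => exact ⟨[], by simpa using Run.refl (c.1, i')⟩
  | @stepLetter q i a q' L c ht hd h ih =>
    have hi : i + 1 ≤ c.2 := h.snd_le
    obtain ⟨L', hL'⟩ := ih (i' := i' + 1) fun k hk => by
      simpa [Nat.add_assoc, Nat.add_comm 1 k] using he (k + 1) (by omega)
    have hea : e[i']? = some a := by simpa [← hd] using (he 0 (by omega)).symm
    refine ⟨L', .stepLetter ht hea ?_⟩
    rwa [show i' + (c.2 - i) = i' + 1 + (c.2 - (i + 1)) by omega]
  | stepVar ht _ ih =>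
    obtain ⟨L', hL'⟩ := ih he
    exact ⟨_, .stepVar ht hL'⟩

/-- Cut the document witnessing that `q` is reachable where the run reaches `q`, and glue on
the suffix read by the accepting run from `q'` on the document witnessing `q'`. -/
theorem Trimmed.exists_runs_meeting (htrim : A.Trimmed) (q q' : Q) :
    ∃ (e : List Sig) (i : ℕ) (L₁ L₂ : List (Marker V × ℕ)) (qf : Q), qf ∈ A.final ∧
      A.Run e (A.init, 0) L₁ (q, i) ∧ A.Run e (q', i) L₂ (qf, e.length) := by
  obtain ⟨d₁, i₁, L₁, _, _, _, h₁, _⟩ := htrim q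
  obtain ⟨d₂, i₂, _, L₂, qf, hqf, _, h₂⟩ := htrim q'
  have hi₁ : i₁ ≤ d₁.length := h₁.snd_le_length (Nat.zero_le _)
  have hi₂ : i₂ ≤ d₂.length := h₂.snd_le
  set e := d₁.take i₁ ++ d₂.drop i₂
  have hlen : (d₁.take i₁).length = i₁ := by simp [hi₁]
  obtain ⟨L₁', h₁'⟩ := h₁.transport (e := e) (i' := 0) fun k hk => by
    simp only [Nat.zero_add] at hk ⊢
    rw [List.getElem?_append_left (by omega), List.getElem?_take_of_lt hk]
  obtain ⟨L₂', h₂'⟩ := h₂.transport (e := e) (i' := i₁) fun k hk => by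
    rw [List.getElem?_append_right (by omega), hlen, Nat.add_sub_cancel_left,
      List.getElem?_drop]
  refine ⟨e, i₁, L₁', L₂', qf, hqf, by simpa using h₁', ?_⟩
  convert h₂' using 3
  simp [e, hlen]

theorem VarRun.append {q q' q'' : Q} {ms ms' : List (Marker V)}
    (h : A.VarRun q ms q') (h' : A.VarRun q' ms' q'') : A.VarRun q (ms ++ ms') q'' := by
  induction h with
  | refl => exact h'
  | step ht _ ih => exact .step ht (ih h')

theorem VarRun.toRun {q q' : Q} {ms : List (Marker V)} (h : A.VarRun q ms q') (d : List Sig)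
    (i : ℕ) : A.Run d (q, i) (ms.map fun m => (m, i)) (q', i) := by
  induction h with
  | refl => exact .refl _
  | step ht _ ih => exact .stepVar ht ih

theorem ValidTrace.nodup_map_fst {L : List (Marker V × ℕ)} (h : ValidTrace L) :
    (L.map Prod.fst).Nodup := by
  rw [List.nodup_iff_injective_get]
  rintro ⟨k, hk⟩ ⟨k', hk'⟩ hkk'
  rw [List.length_map] at hk hk'
  simp only [List.get_eq_getElem, List.getElem_map] at hkk'
  exact Fin.ext (h.1 _ k k' hk hk' rfl hkk'.symm)

theorem VarRun.nodup (hseq : A.Sequential) (htrim : A.Trimmed) {q q' : Q}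
    {ms : List (Marker V)} (h : A.VarRun q ms q') : ms.Nodup := by
  obtain ⟨e, i, L₁, L₂, qf, hqf, h₁, h₂⟩ := htrim.exists_runs_meeting q q'
  have hvalid := hseq e _ ⟨qf, hqf, h₁.append ((h.toRun e i).append h₂)⟩
  refine List.IsInfix.nodup ?_ hvalid.nodup_map_fst
  rw [List.map_append, List.map_append]
  exact ⟨L₁.map Prod.fst, L₂.map Prod.fst, by simp [Function.comp_def]⟩

theorem productDAG_edge_cases {u v : Option Q × ℕ} {l : Option (Finset (Marker V × ℕ))}
    (h : (A.productDAG d).edge u l v) :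
    (l = none ∧ v.2 = u.2 + 1) ∨
      ∃ q m q' i, A.varTr q m q' ∧ u = (some q, i) ∧ v = (some q', i) ∧ l = some {(m, i)} := by
  rcases h with ⟨_, _, _, _, _, _, rfl, rfl, rfl⟩ | ⟨q, m, q', i, ht, _, rfl, rfl, rfl⟩ |
    ⟨_, _, rfl, rfl, rfl⟩
  · exact .inl ⟨rfl, rfl⟩
  · exact .inr ⟨q, m, q', i, ht, rfl, rfl, rfl⟩
  · exact .inl ⟨rfl, rfl⟩

theorem productDAG_edge_mem_verts {u v : Option Q × ℕ} {l : Option (Finset (Marker V × ℕ))}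
    (h : (A.productDAG d).edge u l v) :
    u ∈ (A.productDAG d).verts ∧ v ∈ (A.productDAG d).verts := by
  rcases h with ⟨q, _, q', _, _, hd, rfl, rfl, rfl⟩ | ⟨q, _, q', _, _, hi, rfl, rfl, rfl⟩ |
    ⟨q, _, rfl, rfl, rfl⟩
  · have hi := (List.getElem?_eq_some_iff.mp hd).1
    exact ⟨.inl ⟨q, rfl, hi.le⟩, .inl ⟨q', rfl, hi⟩⟩
  · exact ⟨.inl ⟨q, rfl, hi⟩, .inl ⟨q', rfl, hi⟩⟩
  · exact ⟨.inl ⟨q, rfl, le_rfl⟩, .inr rfl⟩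

theorem productDAG_path_snd_le {u v : Option Q × ℕ} {L : List (Option (Finset (Marker V × ℕ)))}
    (hp : (A.productDAG d).Path u L v) : u.2 ≤ v.2 := by
  induction hp with
  | refl => exact le_rfl
  | step he _ ih =>
    rcases productDAG_edge_cases he with ⟨_, h⟩ | ⟨_, _, _, _, _, rfl, rfl, _⟩
    · omega
    · exact ih

theorem productDAG_path_varRun {u v : Option Q × ℕ} {L : List (Option (Finset (Marker V × ℕ)))}
    (hp : (A.productDAG d).Path u L v) {q : Q} (hq : u.1 = some q) (hv : v.2 = u.2) :
    ∃ q' ms, v.1 = some q' ∧ A.VarRun q ms q' ∧ L = ms.map fun m => some {(m, u.2)} := by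
  induction hp generalizing q with
  | refl => exact ⟨q, [], hq, .refl q, rfl⟩
  | step he hp ih =>
    rcases productDAG_edge_cases he with ⟨_, h⟩ | ⟨q₀, m, q₁, i, ht, rfl, rfl, rfl⟩
    · have := productDAG_path_snd_le hp
      omega
    · cases hq
      obtain ⟨q', ms, hq', hms, rfl⟩ := ih rfl hv
      exact ⟨q', m :: ms, hq', .step ht hms, rfl⟩

theorem productDAG_path_self_eq_nil (hseq : A.Sequential) (htrim : A.Trimmed)
    {v : Option Q × ℕ} {L : List (Option (Finset (Marker V × ℕ)))}
    (hp : (A.productDAG d).Path v L v) : L = [] := by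
  cases hp with
  | refl => rfl
  | step he hp' =>
    exfalso
    rcases productDAG_edge_cases he with ⟨_, h⟩ | ⟨q, m, q', i, _, rfl, rfl, rfl⟩
    · have := productDAG_path_snd_le hp'
      omega
    · obtain ⟨_, ms, hq, hms, hL⟩ := productDAG_path_varRun (.step he hp') rfl rfl
      cases hq
      have hne : ms ≠ [] := by
        rintro rfl
        exact List.cons_ne_nil _ _ hL
      exact List.nodup_append.mp ((hms.append hms).nodup hseq htrim) |>.2.2 _
        (List.head_mem hne) _ (List.head_mem hne) rfl

theorem productDAG_path_pairwise_disjoint (hseq : A.Sequential) (htrim : A.Trimmed)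
    {u w : Option Q × ℕ} {L : List (Option (Finset (Marker V × ℕ)))}
    (hp : (A.productDAG d).Path u L w) :
    L.Pairwise fun l₁ l₂ => ∀ S₁ S₂ : Finset (Marker V × ℕ),
      l₁ = some S₁ → l₂ = some S₂ → Disjoint S₁ S₂ := by
  induction hp with
  | refl => exact .nil
  | step he hp ih =>
    refine .cons (fun l' hl' S₁ S₂ hS₁ hS₂ => ?_) ih
    obtain ⟨_, x, y, hpx, hxy⟩ := hp.exists_edge_of_mem hl'
    rcases productDAG_edge_cases he with ⟨rfl, _⟩ | ⟨q, m, q', i, ht, rfl, rfl, rfl⟩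
    · cases hS₁
    rcases productDAG_edge_cases hxy with ⟨rfl, _⟩ | ⟨q₂, m₂, q₃, j, ht₂, rfl, rfl, rfl⟩
    · cases hS₂
    cases hS₁
    cases hS₂
    rw [Finset.disjoint_singleton]
    intro hmj
    obtain ⟨rfl, rfl⟩ := Prod.mk.inj hmj
    obtain ⟨_, ms, hq, hms, _⟩ := productDAG_path_varRun hpx rfl rfl
    cases hq
    have := (VarRun.step ht (hms.append (.step ht₂ (.refl q₃)))).nodup hseq htrim
    simp at this

theorem productDAG_isMappingDAG (hseq : A.Sequential) (htrim : A.Trimmed) :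
    (A.productDAG d).IsMappingDAG :=
  ⟨.inl ⟨A.init, rfl, Nat.zero_le _⟩, .inr rfl, fun _ _ _ => productDAG_edge_mem_verts,
    fun _ _ => productDAG_path_self_eq_nil hseq htrim,
    fun _ _ _ => productDAG_path_pairwise_disjoint hseq htrim⟩

theorem productDAG_leveled : (A.productDAG d).Leveled := by
  refine ⟨rfl, fun u v he => ?_, fun u S v he => ?_⟩
  · rcases productDAG_edge_cases he with ⟨_, h⟩ | ⟨_, _, _, _, _, _, _, hl⟩
    · exact h
    · cases hl
  · rcases productDAG_edge_cases he with ⟨hl, _⟩ | ⟨_, m, _, i, _, rfl, rfl, hl⟩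
    · cases hl
    · obtain rfl := Option.some.inj hl
      exact ⟨rfl, by simp⟩

theorem productDAG_ncard_level_le [Fintype Q] (i : ℕ) :
    {v ∈ (A.productDAG d).verts | v.2 = i}.ncard ≤ Fintype.card Q := by
  calc _ ≤ (Set.univ : Set Q).ncard :=
        Set.ncard_le_ncard_of_injOn (fun v => v.1.getD A.init) (fun _ _ => trivial) ?_
    _ = Fintype.card Q := by rw [Set.ncard_univ, Nat.card_eq_fintype_card]
  rintro ⟨o, j⟩ ⟨hv, rfl⟩ ⟨o', j'⟩ ⟨hv', hj⟩ h
  rcases hv with ⟨q, rfl, hq⟩ | hv <;> rcases hv' with ⟨q', rfl, hq'⟩ | hv' <;>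
    simp_all

end VA

open LMDAG in
theorem stmt14 {Sig V Q : Type} [Fintype Q] (A : VA Sig V Q)
    (hseq : A.Sequential) (htrim : A.Trimmed) (d : List Sig) :
    (A.productDAG d).IsMappingDAG ∧ (A.productDAG d).Leveled ∧
    ∀ i : ℕ, {v ∈ (A.productDAG d).verts | v.2 = i}.ncard ≤ Fintype.card Q :=
  ⟨VA.productDAG_isMappingDAG hseq htrim, VA.productDAG_leveled, VA.productDAG_ncard_level_le⟩

end Spanners
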